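/- arXiv:1402.1734 — 3 statements merged into one kernel-verified Lean document; each statement's English description precedes it below -/
import Mathlib

section
/- (Proposition 1, prior case.) Let S and L be nonempty finite types, U : S → L → ℝ, and x : S → L. Define f_prior(β) = ∑_{s ∈ S} [U(s)(x(s)) − (∑_{ℓ} U(s)(ℓ)·exp(β·U(s)(ℓ))) / (∑_{ℓ} exp(β·U(s)(ℓ)))]. Then for every β ∈ ℝ, the derivative of f_prior at β equals −∑_{s ∈ S} [∑_{ℓ} q_{s,β}(ℓ)·U(s)(ℓ)² − (∑_{ℓ} q_{s,β}(ℓ)·U(s)(ℓ))²], where q_{s,β}(ℓ) = exp(β·U(s)(ℓ)) / ∑_{ℓ'} exp(β·U(s)(ℓ')); i.e., f_prior'(β) is minus the sum over sites of the conditional variances of U_s(X_s) given X_{∂s}. -/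
/-! Each site contributes a constant minus the Gibbs mean `(∑ ℓ, u ℓ e^{β u ℓ}) / Z(β)` of
`u = U s`, where `Z(β) = ∑ ℓ, e^{β u ℓ}`. Since `Z'` is the numerator, the quotient rule gives
`E[u²] - E[u]²` as the derivative of the mean: the variance of `u` under the weights
`e^{β u ℓ} / Z(β)`. -/

open Real Finset

theorem hasDerivAt_sum_mul_exp_mul {ι : Type*} (t : Finset ι) (c u : ι → ℝ) (β : ℝ) :
    HasDerivAt (fun β : ℝ => ∑ i ∈ t, c i * exp (β * u i))
      (∑ i ∈ t, c i * (u i * exp (β * u i))) β := by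
  refine HasDerivAt.fun_sum fun i _ => HasDerivAt.const_mul (c i) ?_
  simpa [mul_comm] using ((hasDerivAt_id β).mul_const (u i)).exp

theorem hasDerivAt_sum_exp_mul {ι : Type*} (t : Finset ι) (u : ι → ℝ) (β : ℝ) :
    HasDerivAt (fun β : ℝ => ∑ i ∈ t, exp (β * u i)) (∑ i ∈ t, u i * exp (β * u i)) β := by
  simpa using hasDerivAt_sum_mul_exp_mul t 1 u β

theorem hasDerivAt_gibbs_mean {ι : Type*} [Fintype ι] [Nonempty ι] (u : ι → ℝ) (β : ℝ) :
    HasDerivAt (fun β : ℝ => (∑ i, u i * exp (β * u i)) / ∑ i, exp (β * u i))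
      ((∑ i, (exp (β * u i) / ∑ j, exp (β * u j)) * u i ^ 2)
        - (∑ i, (exp (β * u i) / ∑ j, exp (β * u j)) * u i) ^ 2) β := by
  have hZ : ∑ j, exp (β * u j) ≠ 0 := (sum_pos (fun i _ => exp_pos _) univ_nonempty).ne'
  refine ((hasDerivAt_sum_mul_exp_mul univ u u β).fun_div (hasDerivAt_sum_exp_mul univ u β)
    hZ).congr_deriv ?_
  simp only [div_mul_eq_mul_div, ← sum_div]
  field_simp
  simp only [mul_comm (u _) β]
  ring

theorem fprior_hasDerivAt_neg_sum_variances_general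
    {S L : Type*} [Fintype S] [Fintype L] [Nonempty L]
    (U : S → L → ℝ) (x : S → L) (β : ℝ) :
    HasDerivAt (fun β : ℝ => ∑ s, (U s (x s) -
        (∑ ℓ, U s ℓ * Real.exp (β * U s ℓ)) / (∑ ℓ, Real.exp (β * U s ℓ))))
      (-∑ s, ((∑ ℓ, (Real.exp (β * U s ℓ) / ∑ ℓ', Real.exp (β * U s ℓ')) * (U s ℓ) ^ 2)
        - (∑ ℓ, (Real.exp (β * U s ℓ) / ∑ ℓ', Real.exp (β * U s ℓ')) * U s ℓ) ^ 2))
      β := by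
  rw [← sum_neg_distrib]
  exact HasDerivAt.fun_sum fun s _ => (hasDerivAt_gibbs_mean (U s) β).const_sub (U s (x s))

/-- Proposition 1, prior case: the derivative of the prior pseudolikelihood score
function is minus the sum over sites of the conditional variances. -/
theorem fprior_hasDerivAt_neg_sum_variances
    {S L : Type*} [Fintype S] [Nonempty S] [Fintype L] [Nonempty L]
    (U : S → L → ℝ) (x : S → L) (β : ℝ) :
    HasDerivAt (fun β : ℝ => ∑ s, (U s (x s) -
        (∑ ℓ, U s ℓ * Real.exp (β * U s ℓ)) / (∑ ℓ, Real.exp (β * U s ℓ))))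
      (-∑ s, ((∑ ℓ, (Real.exp (β * U s ℓ) / ∑ ℓ', Real.exp (β * U s ℓ')) * (U s ℓ) ^ 2)
        - (∑ ℓ, (Real.exp (β * U s ℓ) / ∑ ℓ', Real.exp (β * U s ℓ')) * U s ℓ) ^ 2))
      β :=
  fprior_hasDerivAt_neg_sum_variances_general U x β
end

section
/- Let S and L be nonempty finite types, U : S → L → ℝ, x : S → L, and w : S → L → ℝ with w(s)(ℓ) > 0 for all s, ℓ. Define f(β) = ∑_{s ∈ S} [U(s)(x(s)) − (∑_{ℓ} w(s)(ℓ)·U(s)(ℓ)·exp(β·U(s)(ℓ))) / (∑_{ℓ} w(s)(ℓ)·exp(β·U(s)(ℓ)))]. Then f(β) tends to ∑_{s ∈ S} (U(s)(x(s)) − min_{ℓ ∈ L} U(s)(ℓ)) as β → −∞. -/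
/-!
As `β → -∞` the Gibbs weights `w ℓ * exp (β * U ℓ)`, rescaled by `exp (-β * min U)`, converge to
`w ℓ` on the labels where `U` is minimal and to `0` elsewhere. Hence the Gibbs mean of `U` at each
site converges to `min U`, and the score, a finite sum over sites, converges termwise.
-/

open Filter Finset Real Topology

lemma tendsto_exp_mul_atBot_of_nonneg {a : ℝ} (ha : 0 ≤ a) :
    Tendsto (fun β : ℝ => exp (β * a)) atBot (𝓝 (if a = 0 then 1 else 0)) := by
  rcases ha.eq_or_lt with rfl | ha
  · simp
  · rw [if_neg ha.ne']
    exact tendsto_exp_atBot.comp (tendsto_id.atBot_mul_const ha)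

section GibbsMean

variable {L : Type*} [Fintype L]

/-- Expectation of `u` under the Gibbs distribution proportional to `w ℓ * exp (β * u ℓ)`. -/
noncomputable def gibbsMean (w u : L → ℝ) (β : ℝ) : ℝ :=
  (∑ ℓ, w ℓ * u ℓ * exp (β * u ℓ)) / ∑ ℓ, w ℓ * exp (β * u ℓ)

variable {w : L → ℝ}

lemma tendsto_gibbsMean_atBot_of_nonneg (hw : ∀ ℓ, 0 < w ℓ) {u : L → ℝ} (hu : ∀ ℓ, 0 ≤ u ℓ)
    (hzero : ∃ ℓ, u ℓ = 0) : Tendsto (gibbsMean w u) atBot (𝓝 0) := by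
  set c : L → ℝ := fun ℓ => if u ℓ = 0 then 1 else 0
  have hnum : Tendsto (fun β => ∑ ℓ, w ℓ * u ℓ * exp (β * u ℓ)) atBot
      (𝓝 (∑ ℓ, w ℓ * u ℓ * c ℓ)) :=
    tendsto_finsetSum _ fun ℓ _ => (tendsto_exp_mul_atBot_of_nonneg (hu ℓ)).const_mul _
  have hden : Tendsto (fun β => ∑ ℓ, w ℓ * exp (β * u ℓ)) atBot (𝓝 (∑ ℓ, w ℓ * c ℓ)) :=
    tendsto_finsetSum _ fun ℓ _ => (tendsto_exp_mul_atBot_of_nonneg (hu ℓ)).const_mul _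
  have hnum_zero : ∑ ℓ, w ℓ * u ℓ * c ℓ = 0 :=
    sum_eq_zero fun ℓ _ => by by_cases h : u ℓ = 0 <;> simp [c, h]
  have hden_pos : 0 < ∑ ℓ, w ℓ * c ℓ := by
    obtain ⟨ℓ₀, hℓ₀⟩ := hzero
    refine sum_pos' (fun ℓ _ => mul_nonneg (hw ℓ).le (by positivity)) ⟨ℓ₀, mem_univ _, ?_⟩
    simp [c, hℓ₀, hw ℓ₀]
  rw [← zero_div (∑ ℓ, w ℓ * c ℓ), ← hnum_zero]
  exact hnum.div hden hden_pos.ne'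

variable [Nonempty L]

lemma gibbsMean_add_const (hw : ∀ ℓ, 0 < w ℓ) (u : L → ℝ) (m β : ℝ) :
    gibbsMean w (fun ℓ => u ℓ + m) β = gibbsMean w u β + m := by
  have hden : 0 < ∑ ℓ, w ℓ * exp (β * u ℓ) :=
    sum_pos (fun ℓ _ => mul_pos (hw ℓ) (exp_pos _)) univ_nonempty
  have hexp : ∀ ℓ, exp (β * (u ℓ + m)) = exp (β * u ℓ) * exp (β * m) := fun ℓ => by
    rw [← exp_add, mul_add]
  have hnum : ∑ ℓ, w ℓ * (u ℓ + m) * (exp (β * u ℓ) * exp (β * m)) =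
      ((∑ ℓ, w ℓ * u ℓ * exp (β * u ℓ)) + m * ∑ ℓ, w ℓ * exp (β * u ℓ)) * exp (β * m) := by
    rw [mul_sum, ← sum_add_distrib, sum_mul]
    exact sum_congr rfl fun ℓ _ => by ring
  have hden' : ∑ ℓ, w ℓ * (exp (β * u ℓ) * exp (β * m)) =
      (∑ ℓ, w ℓ * exp (β * u ℓ)) * exp (β * m) := by
    rw [sum_mul]
    exact sum_congr rfl fun ℓ _ => by ring
  simp only [gibbsMean, hexp]
  rw [hnum, hden', mul_div_mul_right _ _ (exp_pos _).ne', add_div, mul_div_cancel_right₀ _ hden.ne']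

theorem tendsto_gibbsMean_atBot (hw : ∀ ℓ, 0 < w ℓ) (u : L → ℝ) :
    Tendsto (gibbsMean w u) atBot (𝓝 (univ.inf' univ_nonempty u)) := by
  set m := univ.inf' univ_nonempty u
  obtain ⟨ℓ₀, -, hℓ₀⟩ := exists_mem_eq_inf' (univ_nonempty (α := L)) u
  have hshift : gibbsMean w u = fun β => gibbsMean w (fun ℓ => u ℓ - m) β + m := by
    ext β
    simpa only [sub_add_cancel] using gibbsMean_add_const hw (fun ℓ => u ℓ - m) m β
  have hlim := tendsto_gibbsMean_atBot_of_nonneg hw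
    (fun ℓ => sub_nonneg.mpr (inf'_le u (mem_univ ℓ))) ⟨ℓ₀, sub_eq_zero.mpr hℓ₀.symm⟩
  rw [hshift]
  simpa using hlim.add_const m

end GibbsMean

theorem score_tendsto_atBot_general {S L : Type*} [Fintype S] [Fintype L] [Nonempty L]
    (U : S → L → ℝ) (x : S → L) (w : S → L → ℝ) (hw : ∀ s ℓ, 0 < w s ℓ) :
    Filter.Tendsto
      (fun β : ℝ => ∑ s, (U s (x s) -
        (∑ ℓ, w s ℓ * U s ℓ * Real.exp (β * U s ℓ)) /
          (∑ ℓ, w s ℓ * Real.exp (β * U s ℓ))))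
      Filter.atBot
      (nhds (∑ s, (U s (x s) - Finset.univ.inf' Finset.univ_nonempty (U s)))) :=
  tendsto_finsetSum _ fun s _ => tendsto_const_nhds.sub (tendsto_gibbsMean_atBot (hw s) (U s))

/-- The pseudolikelihood score function tends to
∑ₛ (U_s(x_s) − min_ℓ U_s(ℓ)) as β → −∞. -/
theorem score_tendsto_atBot {S L : Type*} [Fintype S] [Nonempty S] [Fintype L] [Nonempty L]
    (U : S → L → ℝ) (x : S → L) (w : S → L → ℝ) (hw : ∀ s ℓ, 0 < w s ℓ) :
    Filter.Tendsto
      (fun β : ℝ => ∑ s, (U s (x s) -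
        (∑ ℓ, w s ℓ * U s ℓ * Real.exp (β * U s ℓ)) /
          (∑ ℓ, w s ℓ * Real.exp (β * U s ℓ))))
      Filter.atBot
      (nhds (∑ s, (U s (x s) - Finset.univ.inf' Finset.univ_nonempty (U s)))) :=
  score_tendsto_atBot_general U x w hw
end

section
/- (Existence and uniqueness of the posterior pseudo-maximum-likelihood estimator.) Let S and L be nonempty finite types, U : S → L → ℝ, x : S → L, and w : S → L → ℝ with w(s)(ℓ) > 0 for all s, ℓ. Define f_post(β) = ∑_{s ∈ S} [U(s)(x(s)) − (∑_{ℓ} w(s)(ℓ)·U(s)(ℓ)·exp(β·U(s)(ℓ))) / (∑_{ℓ} w(s)(ℓ)·exp(β·U(s)(ℓ)))]. If there exist sites s, t ∈ S with U(s)(x(s)) > min_{ℓ ∈ L} U(s)(ℓ) and U(t)(x(t)) < max_{ℓ ∈ L} U(t)(ℓ), then there exists a unique β ∈ ℝ such that f_post(β) = 0. -/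
/-!
For each site `s` the quotient subtracted from `U s (x s)` is the mean `m_s(β)` of `U s` under
the weights `w s ℓ * exp (β * U s ℓ)`. Its derivative in `β` is the variance of `U s` under these
weights, so `m_s` is nondecreasing, and strictly increasing as soon as `U s` is not constant; as
`β → ∓∞` the weights concentrate on the labels minimizing (maximizing) `U s`, so `m_s` runs from
`min U s` to `max U s`. Hence `∑ s, m_s` is a continuous strictly increasing function with limits
`∑ s, min U s` and `∑ s, max U s`, and the hypotheses on `s` and `t` put `∑ s, U s (x s)`
strictly between them.
-/

open Finset Filter Topology Real

lemma existsUnique_eq_of_strictMono_of_tendsto {f : ℝ → ℝ} {a b c : ℝ} (hf : StrictMono f)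
    (hf_cont : Continuous f) (ha : Tendsto f atBot (𝓝 a)) (hb : Tendsto f atTop (𝓝 b))
    (hac : a < c) (hcb : c < b) : ∃! x, f x = c := by
  obtain ⟨x₁, hx₁⟩ := (ha.eventually_lt_const hac).exists
  obtain ⟨x₂, hx₂⟩ := (hb.eventually_const_lt hcb).exists
  obtain ⟨x, hx⟩ := intermediate_value_univ x₁ x₂ hf_cont ⟨hx₁.le, hx₂.le⟩
  exact ⟨x, hx, fun y hy => hf.injective (hy.trans hx.symm)⟩

section WeightedVariance

variable {ι : Type*} [Fintype ι]

lemma sq_sum_mul_le_sum_mul_sum_mul_sq {p : ι → ℝ} (hp : ∀ i, 0 ≤ p i) (u : ι → ℝ) :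
    (∑ i, p i * u i) ^ 2 ≤ (∑ i, p i) * ∑ i, p i * u i ^ 2 :=
  sum_sq_le_sum_mul_sum_of_sq_le_mul univ (fun i _ => hp i)
    (fun i _ => mul_nonneg (hp i) (sq_nonneg _))
    fun i _ => (by ring : (p i * u i) ^ 2 = p i * (p i * u i ^ 2)).le

lemma two_mul_sum_mul_sum_sub_sq (p u : ι → ℝ) :
    2 * ((∑ i, p i) * (∑ i, p i * u i ^ 2) - (∑ i, p i * u i) ^ 2) =
      ∑ i, ∑ j, p i * p j * (u i - u j) ^ 2 := by
  calc _ = ∑ i, ∑ j, (p i * u i ^ 2 * p j - 2 * (p i * u i * (p j * u j))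
        + p i * (p j * u j ^ 2)) := by
        simp only [sum_add_distrib, sum_sub_distrib, ← mul_sum, ← sum_mul, sq]
        ring
    _ = _ := sum_congr rfl fun i _ => sum_congr rfl fun j _ => by ring

lemma sq_sum_mul_lt_sum_mul_sum_mul_sq {p u : ι → ℝ} (hp : ∀ i, 0 < p i) {i₁ i₂ : ι}
    (hu : u i₁ ≠ u i₂) : (∑ i, p i * u i) ^ 2 < (∑ i, p i) * ∑ i, p i * u i ^ 2 := by
  have h := two_mul_sum_mul_sum_sub_sq p u
  have hterm : ∀ i j, 0 ≤ p i * p j * (u i - u j) ^ 2 := fun i j => by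
    have := hp i; have := hp j; positivity
  have : 0 < ∑ i, ∑ j, p i * p j * (u i - u j) ^ 2 := by
    refine sum_pos' (fun i _ => sum_nonneg fun j _ => hterm i j) ⟨i₁, mem_univ _, ?_⟩
    refine sum_pos' (fun j _ => hterm i₁ j) ⟨i₂, mem_univ _, ?_⟩
    have := hp i₁; have := hp i₂; have := sub_ne_zero.2 hu
    positivity
  linarith

end WeightedVariance

section TiltedMean

variable {ι : Type*} [Fintype ι] {w : ι → ℝ}

noncomputable def tiltedMean (w u : ι → ℝ) (β : ℝ) : ℝ :=
  (∑ i, w i * u i * exp (β * u i)) / ∑ i, w i * exp (β * u i)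

noncomputable def tiltedMoment (w u : ι → ℝ) (n : ℕ) (β : ℝ) : ℝ :=
  ∑ i, w i * exp (β * u i) * u i ^ n

lemma tiltedMean_eq_div (w u : ι → ℝ) (β : ℝ) :
    tiltedMean w u β = tiltedMoment w u 1 β / tiltedMoment w u 0 β := by
  simp only [tiltedMean, tiltedMoment, pow_one, pow_zero, mul_one, mul_right_comm (w _)]

lemma tiltedMean_neg (w u : ι → ℝ) (β : ℝ) : tiltedMean w (-u) β = -tiltedMean w u (-β) := by
  simp only [tiltedMean, Pi.neg_apply, mul_neg, neg_mul, sum_neg_distrib, neg_div]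

lemma hasDerivAt_tiltedMoment (w u : ι → ℝ) (n : ℕ) (β : ℝ) :
    HasDerivAt (tiltedMoment w u n) (tiltedMoment w u (n + 1) β) β :=
  HasDerivAt.fun_sum fun i _ =>
    ((((hasDerivAt_id β).mul_const (u i)).exp.const_mul (w i)).mul_const (u i ^ n)).congr_deriv
      (by simp only [id, one_mul, pow_succ]; ring)

lemma tendsto_tiltedMean_atTop_of_nonpos (hw : ∀ i, 0 < w i) {u : ι → ℝ} (hu : ∀ i, u i ≤ 0)
    (hu₀ : ∃ i, u i = 0) : Tendsto (tiltedMean w u) atTop (𝓝 0) := by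
  have hexp : ∀ i, Tendsto (fun β => exp (β * u i)) atTop (𝓝 (if u i = 0 then 1 else 0)) := by
    intro i
    split_ifs with h
    · simp [h]
    · exact tendsto_exp_atBot.comp
        (tendsto_id.atTop_mul_const_of_neg (lt_of_le_of_ne (hu i) h))
  have hnum := tendsto_finsetSum univ fun i _ => (hexp i).const_mul (w i * u i)
  have hden := tendsto_finsetSum univ fun i _ => (hexp i).const_mul (w i)
  have hnum_lim : ∑ i, w i * u i * (if u i = 0 then 1 else 0) = 0 :=
    sum_eq_zero fun i _ => by split_ifs with h <;> simp [h]
  have hden_lim : 0 < ∑ i, w i * (if u i = 0 then 1 else 0) := by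
    obtain ⟨i₀, hi₀⟩ := hu₀
    refine sum_pos' (fun i _ => ?_) ⟨i₀, mem_univ _, by simp [hi₀, hw i₀]⟩
    split_ifs <;> simp [(hw i).le]
  have := hnum.div hden hden_lim.ne'
  rwa [hnum_lim, zero_div] at this

variable [Nonempty ι]

lemma tiltedMoment_zero_pos (hw : ∀ i, 0 < w i) (u : ι → ℝ) (β : ℝ) :
    0 < tiltedMoment w u 0 β :=
  sum_pos (fun i _ => by have := hw i; positivity) univ_nonempty

lemma hasDerivAt_tiltedMean (hw : ∀ i, 0 < w i) (u : ι → ℝ) (β : ℝ) :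
    HasDerivAt (tiltedMean w u)
      ((tiltedMoment w u 0 β * tiltedMoment w u 2 β - tiltedMoment w u 1 β ^ 2) /
        tiltedMoment w u 0 β ^ 2) β := by
  rw [show tiltedMean w u = fun β => tiltedMoment w u 1 β / tiltedMoment w u 0 β from
    funext (tiltedMean_eq_div w u)]
  exact ((hasDerivAt_tiltedMoment w u 1 β).div (hasDerivAt_tiltedMoment w u 0 β)
    (tiltedMoment_zero_pos hw u β).ne').congr_deriv (by ring)

lemma continuous_tiltedMean (hw : ∀ i, 0 < w i) (u : ι → ℝ) : Continuous (tiltedMean w u) :=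
  continuous_iff_continuousAt.2 fun β => (hasDerivAt_tiltedMean hw u β).continuousAt

lemma monotone_tiltedMean (hw : ∀ i, 0 < w i) (u : ι → ℝ) : Monotone (tiltedMean w u) := by
  refine monotone_of_hasDerivAt_nonneg (hasDerivAt_tiltedMean hw u) fun β => ?_
  have := sq_sum_mul_le_sum_mul_sum_mul_sq (p := fun i => w i * exp (β * u i))
    (fun i => by have := hw i; positivity) u
  simp only [tiltedMoment, pow_zero, pow_one, mul_one] at this ⊢
  exact div_nonneg (sub_nonneg.2 this) (sq_nonneg _)

lemma strictMono_tiltedMean (hw : ∀ i, 0 < w i) {u : ι → ℝ} {i₁ i₂ : ι} (hu : u i₁ ≠ u i₂) :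
    StrictMono (tiltedMean w u) := by
  refine strictMono_of_hasDerivAt_pos (hasDerivAt_tiltedMean hw u) fun β => ?_
  have := sq_sum_mul_lt_sum_mul_sum_mul_sq (p := fun i => w i * exp (β * u i))
    (fun i => by have := hw i; positivity) hu
  refine div_pos ?_ (pow_pos (tiltedMoment_zero_pos hw u β) 2)
  simp only [tiltedMoment, pow_zero, pow_one, mul_one] at this ⊢
  exact sub_pos.2 this

lemma tiltedMean_add_const (hw : ∀ i, 0 < w i) (u : ι → ℝ) (c β : ℝ) :
    tiltedMean w (fun i => u i + c) β = tiltedMean w u β + c := by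
  have hden : ∑ i, w i * exp (β * u i) ≠ 0 := by
    simpa [tiltedMoment] using (tiltedMoment_zero_pos hw u β).ne'
  have hnum_shift : ∑ i, w i * (u i + c) * exp (β * (u i + c)) =
      exp (β * c) * (∑ i, w i * u i * exp (β * u i) + c * ∑ i, w i * exp (β * u i)) := by
    simp only [mul_sum, ← sum_add_distrib]
    exact sum_congr rfl fun i _ => by rw [mul_add β, exp_add]; ring
  have hden_shift : ∑ i, w i * exp (β * (u i + c)) = exp (β * c) * ∑ i, w i * exp (β * u i) := by
    simp only [mul_sum]
    exact sum_congr rfl fun i _ => by rw [mul_add β, exp_add]; ring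
  rw [tiltedMean, tiltedMean, hnum_shift, hden_shift, mul_div_mul_left _ _ (exp_ne_zero _),
    add_div, mul_div_cancel_right₀ _ hden]

lemma tendsto_tiltedMean_atTop (hw : ∀ i, 0 < w i) {u : ι → ℝ} {M : ℝ} (hu : ∀ i, u i ≤ M)
    (hM : ∃ i, u i = M) : Tendsto (tiltedMean w u) atTop (𝓝 M) := by
  have hshift : tiltedMean w u = fun β => tiltedMean w (fun i => u i - M) β + M := by
    funext β
    rw [← tiltedMean_add_const hw]
    simp only [sub_add_cancel]
  have := (tendsto_tiltedMean_atTop_of_nonpos hw (fun i => sub_nonpos.2 (hu i))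
    (hM.imp fun i h => sub_eq_zero.2 h)).add_const M
  rwa [zero_add, ← hshift] at this

lemma tendsto_tiltedMean_atBot (hw : ∀ i, 0 < w i) {u : ι → ℝ} {m : ℝ} (hu : ∀ i, m ≤ u i)
    (hm : ∃ i, u i = m) : Tendsto (tiltedMean w u) atBot (𝓝 m) := by
  have hneg : tiltedMean w u = fun β => -tiltedMean w (-u) (-β) := by
    funext β
    rw [tiltedMean_neg, neg_neg, neg_neg]
  have := tendsto_tiltedMean_atTop hw (u := -u) (M := -m) (fun i => neg_le_neg (hu i))
    (hm.imp fun i h => congrArg Neg.neg h)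
  rw [hneg, ← neg_neg m]
  exact (this.comp tendsto_neg_atBot_atTop).neg

end TiltedMean

theorem fpost_existsUnique_root_general
    {S L : Type*} [Fintype S] [Fintype L] [Nonempty L]
    (U : S → L → ℝ) (x : S → L) (w : S → L → ℝ) (hw : ∀ s ℓ, 0 < w s ℓ)
    (hs : ∃ s : S, Finset.univ.inf' Finset.univ_nonempty (U s) < U s (x s))
    (ht : ∃ t : S, U t (x t) < Finset.univ.sup' Finset.univ_nonempty (U t)) :
    ∃! β : ℝ, ∑ s, (U s (x s) -
      (∑ ℓ, w s ℓ * U s ℓ * Real.exp (β * U s ℓ)) /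
        (∑ ℓ, w s ℓ * Real.exp (β * U s ℓ))) = 0 := by
  obtain ⟨s₀, hs₀⟩ := hs
  obtain ⟨t₀, ht₀⟩ := ht
  obtain ⟨ℓ₀, -, hℓ₀⟩ := exists_mem_eq_inf' univ_nonempty (U s₀)
  have hG_strictMono : StrictMono fun β => ∑ s, tiltedMean (w s) (U s) β := fun a b hab =>
    sum_lt_sum (fun s _ => monotone_tiltedMean (hw s) (U s) hab.le)
      ⟨s₀, mem_univ _, strictMono_tiltedMean (hw s₀) (hℓ₀ ▸ hs₀).ne' hab⟩
  have hG_cont : Continuous fun β => ∑ s, tiltedMean (w s) (U s) β :=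
    continuous_finsetSum _ fun s _ => continuous_tiltedMean (hw s) (U s)
  have hG_atBot := tendsto_finsetSum univ fun s _ => tendsto_tiltedMean_atBot (hw s)
    (fun ℓ => inf'_le (U s) (mem_univ ℓ)) ((exists_mem_eq_inf' univ_nonempty (U s)).imp
      fun _ h => h.2.symm)
  have hG_atTop := tendsto_finsetSum univ fun s _ => tendsto_tiltedMean_atTop (hw s)
    (fun ℓ => le_sup' (U s) (mem_univ ℓ)) ((exists_mem_eq_sup' univ_nonempty (U s)).imp
      fun _ h => h.2.symm)
  have hlow : ∑ s, univ.inf' univ_nonempty (U s) < ∑ s, U s (x s) :=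
    sum_lt_sum (fun s _ => inf'_le (U s) (mem_univ _)) ⟨s₀, mem_univ _, hs₀⟩
  have hhigh : ∑ s, U s (x s) < ∑ s, univ.sup' univ_nonempty (U s) :=
    sum_lt_sum (fun s _ => le_sup' (U s) (mem_univ _)) ⟨t₀, mem_univ _, ht₀⟩
  refine (existsUnique_congr fun β => ?_).2 (existsUnique_eq_of_strictMono_of_tendsto
    hG_strictMono hG_cont hG_atBot hG_atTop hlow hhigh)
  rw [sum_sub_distrib, sub_eq_zero, eq_comm]
  rfl

/-- Existence and uniqueness of the posterior pseudo-maximum-likelihood estimator. -/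
theorem fpost_existsUnique_root
    {S L : Type*} [Fintype S] [Nonempty S] [Fintype L] [Nonempty L]
    (U : S → L → ℝ) (x : S → L) (w : S → L → ℝ) (hw : ∀ s ℓ, 0 < w s ℓ)
    (hs : ∃ s : S, Finset.univ.inf' Finset.univ_nonempty (U s) < U s (x s))
    (ht : ∃ t : S, U t (x t) < Finset.univ.sup' Finset.univ_nonempty (U t)) :
    ∃! β : ℝ, ∑ s, (U s (x s) -
      (∑ ℓ, w s ℓ * U s ℓ * Real.exp (β * U s ℓ)) /
        (∑ ℓ, w s ℓ * Real.exp (β * U s ℓ))) = 0 :=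
  fpost_existsUnique_root_general U x w hw hs ht
end
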